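/- arXiv:2106.01985 — 3 statements merged into one kernel-verified Lean document; each statement's English description precedes it below -/
import Mathlib

section
/- Let α be log-Hölder continuous with values in (0,1], let 0 < ε < 1 and let t ∈ ℝⁿ with |t| ≤ 1. If points x, y satisfy |log|x−y|| < (n+1)/(1−sup α) · |log ε|, then there is a constant C, depending only on the log-Hölder constant, sup α, and n, such that |x−y|^{α(x−εt)} ≤ C |x−y|^{α(x)}. -/
open Metric Set Real

/-- If `α` is log-Hölder with values in `(0, supα]`, `supα < 1`,
`0 < ε < 1`, `|t| ≤ 1`, and the points `x,y` satisfy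
`|log|x−y|| < (n+1)/(1−supα)·|log ε|`, then `|x−y|^{α(x−εt)} ≤ C |x−y|^{α(x)}`
for a constant depending only on the log-Hölder constant, `supα` and `n`. -/
theorem stmt_5 (n : ℕ) (c A : ℝ) (hc : 0 < c) (hA : A < 1) :
    ∃ C : ℝ, 0 < C ∧
      ∀ (α : EuclideanSpace ℝ (Fin n) → ℝ)
        (ε : ℝ) (t x y : EuclideanSpace ℝ (Fin n)),
        (∀ z, 0 < α z ∧ α z ≤ A) →
        (∀ z w, z ≠ w → |α z - α w| ≤ c / Real.log (Real.exp 1 + 1 / dist z w)) →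
        0 < ε → ε < 1 → ‖t‖ ≤ 1 →
        0 < dist x y → dist x y ≤ 1 →
        |Real.log (dist x y)| < ((n : ℝ) + 1) / (1 - A) * |Real.log ε| →
        dist x y ^ α (x - ε • t) ≤ C * dist x y ^ α x := by
  have hA1 : 0 < 1 - A := by linarith
  refine ⟨Real.exp (c * ((n : ℝ) + 1) / (1 - A)), Real.exp_pos _, ?_⟩
  intro α ε t x y hα hhol hε hε1 ht hd hd1 hlog
  set r := dist x y with hr
  have hεlog : 0 < |Real.log ε| := abs_pos.mpr (ne_of_lt (Real.log_neg hε hε1))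
  have hΔ : |α (x - ε • t) - α x| * |Real.log r| ≤ c * ((n : ℝ) + 1) / (1 - A) := by
    by_cases h : x - ε • t = x
    · rw [h]; simp; positivity
    · have hdist : dist (x - ε • t) x = ε * ‖t‖ := by
        rw [dist_eq_norm]
        simp [norm_smul, abs_of_pos hε]
      have hdpos : 0 < dist (x - ε • t) x := dist_pos.mpr h
      have hdle : dist (x - ε • t) x ≤ ε := by
        rw [hdist]
        calc ε * ‖t‖ ≤ ε * 1 := by
              exact mul_le_mul_of_nonneg_left ht hε.le
          _ = ε := mul_one ε
      have hlog2 : |Real.log ε| ≤ Real.log (Real.exp 1 + 1 / dist (x - ε • t) x) := by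
        have h1 : |Real.log ε| = Real.log (1 / ε) := by
          rw [abs_of_neg (Real.log_neg hε hε1), Real.log_div one_ne_zero (ne_of_gt hε),
            Real.log_one]
          ring
        rw [h1]
        apply Real.log_le_log (by positivity)
        have h2 : (1 : ℝ) / ε ≤ 1 / dist (x - ε • t) x :=
          one_div_le_one_div_of_le hdpos hdle
        have h3 : 0 < Real.exp 1 := Real.exp_pos 1
        linarith
      have hden : 0 < Real.log (Real.exp 1 + 1 / dist (x - ε • t) x) :=
        lt_of_lt_of_le hεlog hlog2
      have hΔ1 : |α (x - ε • t) - α x| ≤ c / |Real.log ε| :=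
        le_trans (hhol _ _ h) (div_le_div_of_nonneg_left hc.le hεlog hlog2)
      calc |α (x - ε • t) - α x| * |Real.log r|
          ≤ (c / |Real.log ε|) * (((n : ℝ) + 1) / (1 - A) * |Real.log ε|) := by
            apply mul_le_mul hΔ1 hlog.le (abs_nonneg _) (by positivity)
        _ = c * ((n : ℝ) + 1) / (1 - A) := by
            field_simp
  rw [Real.rpow_def_of_pos hd, Real.rpow_def_of_pos hd, ← Real.exp_add]
  apply Real.exp_le_exp.mpr
  have : (α (x - ε • t) - α x) * Real.log r ≤ c * ((n : ℝ) + 1) / (1 - A) := by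
    calc (α (x - ε • t) - α x) * Real.log r
        ≤ |(α (x - ε • t) - α x) * Real.log r| := le_abs_self _
      _ = |α (x - ε • t) - α x| * |Real.log r| := abs_mul _ _
      _ ≤ c * ((n : ℝ) + 1) / (1 - A) := hΔ
  nlinarith [this]
end

section
/- Let 0 < r̄ < r ≤ 1/2, α log-Hölder continuous on B_r with 0 < inf α ≤ α ≤ sup α < 1, and u ∈ C^{0,α(·)}(B_r). Let η ∈ C_c^∞(ℝⁿ) be a nonnegative Lipschitz mollifier supported in B₁ with integral 1, and set u_ε = u * η_ε where η_ε(x) = ε^{−n} η(x/ε). Then there exist ε̄ = ε̄(r̄) > 0 and a constant c > 0, independent of ε, such that for all 0 < ε ≤ ε̄, ‖u_ε‖_{C^{0,α(·)}(B_{r̄})} ≤ c. -/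
open Metric Set Real MeasureTheory

set_option maxHeartbeats 1600000

/-- Lemma `keylemma`, case k = 0: uniform bound in the variable
exponent Hölder space for mollifications `u_ε = u * η_ε` of
`u ∈ C^{0,α(·)}(B_r)`, with `α` log-Hölder, on a smaller ball `B_{r̄}`,
with constant independent of `0 < ε ≤ ε̄(r̄)`. -/
theorem stmt_6 {n : ℕ} (r rbar : ℝ) (hr1 : 0 < rbar) (hr2 : rbar < r)
    (hr3 : r ≤ 1 / 2)
    (α : EuclideanSpace ℝ (Fin n) → ℝ) (a b cα : ℝ)
    (ha : 0 < a) (hb : b < 1) (hcα : 0 < cα)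
    (hαb : ∀ x ∈ ball (0 : EuclideanSpace ℝ (Fin n)) r, a ≤ α x ∧ α x ≤ b)
    (hlog : ∀ x ∈ ball (0 : EuclideanSpace ℝ (Fin n)) r,
      ∀ y ∈ ball (0 : EuclideanSpace ℝ (Fin n)) r, x ≠ y →
      |α x - α y| ≤ cα / Real.log (Real.exp 1 + 1 / dist x y))
    (η : EuclideanSpace ℝ (Fin n) → ℝ) (L : NNReal)
    (hηsm : ContDiff ℝ (⊤ : ℕ∞) η) (hηsupp : tsupport η ⊆ closedBall 0 1)
    (hηpos : ∀ t, 0 ≤ η t) (hηint : ∫ t, η t = 1)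
    (hηLip : LipschitzWith L η)
    (u : EuclideanSpace ℝ (Fin n) → ℝ) (Mu Cu : ℝ)
    (huB : ∀ x ∈ ball (0 : EuclideanSpace ℝ (Fin n)) r, |u x| ≤ Mu)
    (huc : ContinuousOn u (ball 0 r))
    (hu : ∀ x ∈ ball (0 : EuclideanSpace ℝ (Fin n)) r,
      ∀ y ∈ ball (0 : EuclideanSpace ℝ (Fin n)) r, 0 < dist x y → dist x y ≤ 1 →
      |u x - u y| ≤ Cu * dist x y ^ max (α x) (α y)) :
    ∃ εbar : ℝ, 0 < εbar ∧ ∃ c : ℝ, 0 < c ∧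
      ∀ ε : ℝ, 0 < ε → ε ≤ εbar →
        (∀ x ∈ closedBall (0 : EuclideanSpace ℝ (Fin n)) rbar,
          |∫ t, η t * u (x - ε • t)| ≤ c) ∧
        (∀ x ∈ closedBall (0 : EuclideanSpace ℝ (Fin n)) rbar,
          ∀ y ∈ closedBall (0 : EuclideanSpace ℝ (Fin n)) rbar,
          0 < dist x y → dist x y ≤ 1 →
          |(∫ t, η t * u (x - ε • t)) - ∫ t, η t * u (y - ε • t)| ≤
            c * dist x y ^ max (α x) (α y)) := by
  have hr0 : 0 < r := hr1.trans hr2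
  have h0mem : (0 : EuclideanSpace ℝ (Fin n)) ∈ ball (0 : EuclideanSpace ℝ (Fin n)) r :=
    mem_ball_self hr0
  have hab : a ≤ b := le_trans (hαb 0 h0mem).1 (hαb 0 h0mem).2
  have h1b : 0 < 1 - b := by linarith
  have hMu : 0 ≤ Mu := le_trans (abs_nonneg _) (huB 0 h0mem)
  obtain ⟨V, hV⟩ : ∃ V : ℝ, V = (volume (closedBall (0 : EuclideanSpace ℝ (Fin n)) 2)).toReal :=
    ⟨_, rfl⟩
  have hVnn : 0 ≤ V := hV ▸ ENNReal.toReal_nonneg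
  obtain ⟨Cu', hCu'def⟩ : ∃ C : ℝ, C = max Cu 0 := ⟨_, rfl⟩
  have hCu' : 0 ≤ Cu' := hCu'def ▸ le_max_right _ _
  have hCuCu' : Cu ≤ Cu' := hCu'def ▸ le_max_left _ _
  obtain ⟨c, hc⟩ : ∃ c : ℝ, c = Mu + (L : ℝ) * Mu * V + Cu' * Real.exp (cα / (1 - b)) + 1 :=
    ⟨_, rfl⟩
  have hLMuV : 0 ≤ (L : ℝ) * Mu * V := by positivity
  have hCuexp : 0 ≤ Cu' * Real.exp (cα / (1 - b)) := by positivity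
  have hcpos : 0 < c := by linarith
  have hsubB : closedBall (0 : EuclideanSpace ℝ (Fin n)) rbar ⊆ ball 0 r :=
    closedBall_subset_ball hr2
  have hηC : HasCompactSupport η :=
    IsCompact.of_isClosed_subset (isCompact_closedBall 0 1) (isClosed_tsupport η) hηsupp
  have hηInt : Integrable η := hηsm.continuous.integrable_of_hasCompactSupport hηC
  refine ⟨min ((r - rbar) / 4) 1, lt_min (by linarith) one_pos, c, hcpos, ?_⟩
  intro ε hε hεle
  have hε1 : ε ≤ 1 := le_trans hεle (min_le_right _ _)
  have hε4 : ε ≤ (r - rbar) / 4 := le_trans hεle (min_le_left _ _)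
  have hεne : ε ≠ 0 := ne_of_gt hε
  -- if x ∈ closedBall rbar and ‖t‖ ≤ 2 then x - ε•t ∈ ball r
  have hmem : ∀ x ∈ closedBall (0 : EuclideanSpace ℝ (Fin n)) rbar, ∀ t : EuclideanSpace ℝ (Fin n),
      ‖t‖ ≤ 2 → x - ε • t ∈ ball (0 : EuclideanSpace ℝ (Fin n)) r := by
    intro x hx t ht
    rw [mem_ball_zero_iff]
    have h1 : ‖x‖ ≤ rbar := mem_closedBall_zero_iff.1 hx
    have h2 : ‖ε • t‖ ≤ 2 * ε := by
      rw [norm_smul, Real.norm_eq_abs, abs_of_pos hε]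
      nlinarith
    calc ‖x - ε • t‖ ≤ ‖x‖ + ‖ε • t‖ := norm_sub_le _ _
      _ < r := by linarith
  -- continuity of the integrand
  have hcont : ∀ x ∈ closedBall (0 : EuclideanSpace ℝ (Fin n)) rbar,
      Continuous (fun t : EuclideanSpace ℝ (Fin n) => η t * u (x - ε • t)) := by
    intro x hx
    rw [continuous_iff_continuousAt]
    intro t0
    by_cases ht0 : t0 ∈ ball (0 : EuclideanSpace ℝ (Fin n)) 2
    · have hco : ContinuousOn (fun t : EuclideanSpace ℝ (Fin n) => η t * u (x - ε • t))
          (ball (0 : EuclideanSpace ℝ (Fin n)) 2) := by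
        apply ContinuousOn.mul hηsm.continuous.continuousOn
        apply huc.comp
        · exact (continuous_const.sub (continuous_id.const_smul ε)).continuousOn
        · intro t ht
          exact hmem x hx t (le_of_lt (mem_ball_zero_iff.1 ht))
      exact hco.continuousAt (isOpen_ball.mem_nhds ht0)
    · have hn : t0 ∉ tsupport η := fun h => ht0 (by
        have h1 := mem_closedBall_zero_iff.1 (hηsupp h)
        exact mem_ball_zero_iff.2 (by linarith))
      have hev : ∀ᶠ t in nhds t0, η t * u (x - ε • t) = 0 := by
        filter_upwards [(isClosed_tsupport η).isOpen_compl.mem_nhds hn] with t ht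
        simp [image_eq_zero_of_notMem_tsupport ht]
      exact Filter.EventuallyEq.continuousAt (hev : _)
  have hsuppC : ∀ x : EuclideanSpace ℝ (Fin n),
      HasCompactSupport (fun t : EuclideanSpace ℝ (Fin n) => η t * u (x - ε • t)) :=
    fun x => hηC.mul_right
  have hint : ∀ x ∈ closedBall (0 : EuclideanSpace ℝ (Fin n)) rbar,
      Integrable (fun t : EuclideanSpace ℝ (Fin n) => η t * u (x - ε • t)) :=
    fun x hx => (hcont x hx).integrable_of_hasCompactSupport (hsuppC x)
  -- pointwise bound on η
  have hηball : ∀ t : EuclideanSpace ℝ (Fin n), η t ≠ 0 → ‖t‖ ≤ 1 := by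
    intro t ht
    exact mem_closedBall_zero_iff.1 (hηsupp (subset_tsupport η ht))
  constructor
  · -- L∞ bound
    intro x hx
    calc |∫ t, η t * u (x - ε • t)| ≤ ∫ t, |η t * u (x - ε • t)| := by
          simpa only [Real.norm_eq_abs] using
            norm_integral_le_integral_norm (μ := volume)
              (fun t : EuclideanSpace ℝ (Fin n) => η t * u (x - ε • t))
      _ ≤ ∫ t, η t * Mu := by
          apply integral_mono (hint x hx).abs (hηInt.mul_const Mu)
          intro t
          show |η t * u (x - ε • t)| ≤ η t * Mu
          by_cases hη : η t = 0
          · simp [hη]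
          · rw [abs_mul, abs_of_nonneg (hηpos t)]
            exact mul_le_mul_of_nonneg_left
              (huB _ (hmem x hx t (by linarith [hηball t hη]))) (hηpos t)
      _ = Mu := by rw [integral_mul_const, hηint, one_mul]
      _ ≤ c := by linarith
  · -- Hölder bound
    intro x hx y hy hd0 hd1
    set d : ℝ := dist x y with hd
    set m : ℝ := max (α x) (α y) with hm
    have hxr : x ∈ ball (0 : EuclideanSpace ℝ (Fin n)) r := hsubB hx
    have hyr : y ∈ ball (0 : EuclideanSpace ℝ (Fin n)) r := hsubB hy
    have hma : a ≤ m := le_trans (hαb x hxr).1 (le_max_left _ _)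
    have hmb : m ≤ b := max_le (hαb x hxr).2 (hαb y hyr).2
    have hdm : 0 ≤ d ^ m := Real.rpow_nonneg hd0.le m
    by_cases hcase : d ≤ ε ^ ((1 : ℝ) / (1 - b))
    · -- Lipschitz regime: d small compared to ε
      set v : EuclideanSpace ℝ (Fin n) := ε⁻¹ • (y - x) with hv
      have hεvd : ‖v‖ = d / ε := by
        rw [hv, norm_smul, norm_inv, Real.norm_eq_abs, abs_of_pos hε, ← dist_eq_norm,
          dist_comm, ← hd, div_eq_inv_mul]
      have hdε : d ≤ ε := by
        calc d ≤ ε ^ ((1 : ℝ) / (1 - b)) := hcase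
          _ ≤ ε ^ (1 : ℝ) := by
              apply Real.rpow_le_rpow_of_exponent_ge hε hε1
              rw [le_div_iff₀ h1b]
              nlinarith
          _ = ε := Real.rpow_one ε
      have hεv : ‖v‖ ≤ 1 := by rw [hεvd]; exact (div_le_one hε).2 hdε
      have heq : (fun t : EuclideanSpace ℝ (Fin n) => η (t + v) * u (x - ε • t)) =
          fun t => η (t + v) * u (y - ε • (t + v)) := by
        funext t
        congr 2
        rw [smul_add, hv, smul_inv_smul₀ hεne]
        abel
      have hshift : (∫ t, η t * u (y - ε • t)) = ∫ t, η (t + v) * u (x - ε • t) := by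
        rw [heq]
        exact (integral_add_right_eq_self
          (fun s : EuclideanSpace ℝ (Fin n) => η s * u (y - ε • s)) v).symm
      have hint2 : Integrable (fun t : EuclideanSpace ℝ (Fin n) => η (t + v) * u (x - ε • t)) := by
        rw [heq]
        exact (hint y hy).comp_add_right v
      have hdiff : (∫ t, η t * u (x - ε • t)) - (∫ t, η t * u (y - ε • t))
          = ∫ t, (η t * u (x - ε • t) - η (t + v) * u (x - ε • t)) := by
        rw [hshift, ← integral_sub (hint x hx) hint2]
      rw [hdiff]
      set F : EuclideanSpace ℝ (Fin n) → ℝ :=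
        fun t => η t * u (x - ε • t) - η (t + v) * u (x - ε • t) with hF
      have hFz : ∀ t ∉ closedBall (0 : EuclideanSpace ℝ (Fin n)) 2, F t = 0 := by
        intro t ht
        have ht2 : 2 < ‖t‖ := by
          by_contra h
          exact ht (mem_closedBall_zero_iff.2 (by linarith))
        have hη1 : η t = 0 := by
          by_contra h
          linarith [hηball t h]
        have hη2 : η (t + v) = 0 := by
          by_contra h
          have := hηball _ h
          have h3 : ‖t‖ ≤ ‖t + v‖ + ‖v‖ := by
            calc ‖t‖ = ‖t + v - v‖ := by rw [add_sub_cancel_right]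
              _ ≤ ‖t + v‖ + ‖v‖ := norm_sub_le _ _
          linarith
        simp [hF, hη1, hη2]
      have hFbd : ∀ t ∈ closedBall (0 : EuclideanSpace ℝ (Fin n)) 2,
          ‖F t‖ ≤ (L : ℝ) * (d / ε) * Mu := by
        intro t ht
        have ht2 : ‖t‖ ≤ 2 := mem_closedBall_zero_iff.1 ht
        have hu1 : |u (x - ε • t)| ≤ Mu := huB _ (hmem x hx t ht2)
        have hLip : |η t - η (t + v)| ≤ (L : ℝ) * (d / ε) := by
          have h1 := hηLip.dist_le_mul t (t + v)
          rw [Real.dist_eq] at h1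
          have h2 : dist t (t + v) = ‖v‖ := by
            rw [dist_eq_norm]
            have : t - (t + v) = -v := by abel
            rw [this, norm_neg]
          rw [h2, hεvd] at h1
          exact h1
        calc ‖F t‖ = |η t - η (t + v)| * |u (x - ε • t)| := by
              simp only [hF, Real.norm_eq_abs]
              rw [← sub_mul, abs_mul]
          _ ≤ ((L : ℝ) * (d / ε)) * Mu := by
              apply mul_le_mul hLip hu1 (abs_nonneg _)
              positivity
      have hFmeas : AEStronglyMeasurable F
          (volume.restrict (closedBall (0 : EuclideanSpace ℝ (Fin n)) 2)) := by
        apply ContinuousOn.aestronglyMeasurable _ measurableSet_closedBall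
        apply ContinuousOn.sub
        · exact (hcont x hx).continuousOn
        · apply ContinuousOn.mul
          · exact (hηsm.continuous.comp (continuous_id.add continuous_const)).continuousOn
          · apply huc.comp
            · exact (continuous_const.sub (continuous_id.const_smul ε)).continuousOn
            · intro t ht
              exact hmem x hx t (mem_closedBall_zero_iff.1 ht)
      have hkey : d / ε ≤ d ^ m := by
        have h1 : d ^ ((1 : ℝ) - m) ≤ ε := by
          calc d ^ ((1 : ℝ) - m) ≤ d ^ ((1 : ℝ) - b) :=
                Real.rpow_le_rpow_of_exponent_ge hd0 hd1 (by linarith)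
            _ ≤ (ε ^ ((1 : ℝ) / (1 - b))) ^ ((1 : ℝ) - b) :=
                Real.rpow_le_rpow hd0.le hcase h1b.le
            _ = ε := by
                rw [← Real.rpow_mul hε.le, one_div, inv_mul_cancel₀ (ne_of_gt h1b),
                  Real.rpow_one]
        have h2 : d = d ^ m * d ^ ((1 : ℝ) - m) := by
          rw [← Real.rpow_add hd0]
          norm_num
        rw [div_le_iff₀ hε]
        calc d = d ^ m * d ^ ((1 : ℝ) - m) := h2
          _ ≤ d ^ m * ε := mul_le_mul_of_nonneg_left h1 hdm
      calc |∫ t, F t| = ‖∫ t in closedBall (0 : EuclideanSpace ℝ (Fin n)) 2, F t‖ := by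
            rw [setIntegral_eq_integral_of_forall_compl_eq_zero hFz, Real.norm_eq_abs]
        _ ≤ ((L : ℝ) * (d / ε) * Mu) * V := by
            rw [hV]
            exact norm_setIntegral_le_of_norm_le_const measure_closedBall_lt_top hFbd
        _ = ((L : ℝ) * Mu * V) * (d / ε) := by ring
        _ ≤ ((L : ℝ) * Mu * V) * d ^ m := mul_le_mul_of_nonneg_left hkey hLMuV
        _ ≤ c * d ^ m := mul_le_mul_of_nonneg_right (by linarith) hdm
    · -- Hölder regime: d large compared to ε
      push_neg at hcase
      set δ : ℝ := cα / Real.log (Real.exp 1 + 1 / ε) with hδdef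
      have hinv : (1 : ℝ) ≤ 1 / ε := by rw [le_div_iff₀ hε]; linarith
      have hlogε : 1 ≤ Real.log (Real.exp 1 + 1 / ε) := by
        calc (1 : ℝ) = Real.log (Real.exp 1) := (Real.log_exp 1).symm
          _ ≤ Real.log (Real.exp 1 + 1 / ε) :=
              Real.log_le_log (Real.exp_pos 1)
                (le_add_of_nonneg_right (one_div_pos.mpr hε).le)
      have hlogpos : 0 < Real.log (Real.exp 1 + 1 / ε) := lt_of_lt_of_le one_pos hlogε
      have hδpos : 0 < δ := div_pos hcα hlogpos
      -- log-Hölder control of the exponent shift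
      have hδbd : ∀ z ∈ closedBall (0 : EuclideanSpace ℝ (Fin n)) rbar,
          ∀ t : EuclideanSpace ℝ (Fin n), ‖t‖ ≤ 1 → α z - δ ≤ α (z - ε • t) := by
        intro z hz t ht
        by_cases hzt : z = z - ε • t
        · rw [← hzt]; linarith
        · have hzr : z ∈ ball (0 : EuclideanSpace ℝ (Fin n)) r := hsubB hz
          have hztr : z - ε • t ∈ ball (0 : EuclideanSpace ℝ (Fin n)) r :=
            hmem z hz t (by linarith)
          have habs := hlog z hzr (z - ε • t) hztr hzt
          have hdz : dist z (z - ε • t) ≤ ε := by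
            rw [dist_eq_norm]
            have h1 : z - (z - ε • t) = ε • t := by abel
            rw [h1, norm_smul, Real.norm_eq_abs, abs_of_pos hε]
            nlinarith
          have hdzpos : 0 < dist z (z - ε • t) := dist_pos.2 hzt
          have hmono : Real.log (Real.exp 1 + 1 / ε) ≤
              Real.log (Real.exp 1 + 1 / dist z (z - ε • t)) := by
            apply Real.log_le_log (by linarith [Real.exp_pos 1, one_div_pos.mpr hε])
            have : 1 / ε ≤ 1 / dist z (z - ε • t) := by
              apply one_div_le_one_div_of_le hdzpos hdz
            linarith
          have hδbd2 : cα / Real.log (Real.exp 1 + 1 / dist z (z - ε • t)) ≤ δ := by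
            rw [hδdef]
            exact div_le_div_of_nonneg_left hcα.le hlogpos hmono
          have := (abs_le.1 (habs.trans hδbd2)).2
          linarith
      -- subtract the integrals
      have hsub : (∫ t, η t * u (x - ε • t)) - (∫ t, η t * u (y - ε • t))
          = ∫ t, (η t * u (x - ε • t) - η t * u (y - ε • t)) :=
        (integral_sub (hint x hx) (hint y hy)).symm
      rw [hsub]
      have hptw : ∀ t : EuclideanSpace ℝ (Fin n),
          |η t * u (x - ε • t) - η t * u (y - ε • t)| ≤ η t * (Cu' * d ^ (m - δ)) := by
        intro t
        by_cases hη : η t = 0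
        · simp [hη]
        · have ht1 : ‖t‖ ≤ 1 := hηball t hη
          have hx' := hmem x hx t (by linarith)
          have hy' := hmem y hy t (by linarith)
          have hdist : dist (x - ε • t) (y - ε • t) = d := dist_sub_right x y (ε • t)
          have h1 := hu _ hx' _ hy' (by rw [hdist]; exact hd0) (by rw [hdist]; exact hd1)
          rw [hdist] at h1
          have hmax : m - δ ≤ max (α (x - ε • t)) (α (y - ε • t)) := by
            have h2 := hδbd x hx t ht1
            have h3 := hδbd y hy t ht1
            rcases le_total (α x) (α y) with h | h
            · calc m - δ = α y - δ := by rw [hm, max_eq_right h]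
                _ ≤ α (y - ε • t) := h3
                _ ≤ _ := le_max_right _ _
            · calc m - δ = α x - δ := by rw [hm, max_eq_left h]
                _ ≤ α (x - ε • t) := h2
                _ ≤ _ := le_max_left _ _
          have hrp : d ^ max (α (x - ε • t)) (α (y - ε • t)) ≤ d ^ (m - δ) :=
            Real.rpow_le_rpow_of_exponent_ge hd0 hd1 hmax
          have h4 : |u (x - ε • t) - u (y - ε • t)| ≤ Cu' * d ^ (m - δ) := by
            calc |u (x - ε • t) - u (y - ε • t)| ≤ Cu * d ^ max (α (x - ε • t)) (α (y - ε • t)) := h1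
              _ ≤ Cu' * d ^ max (α (x - ε • t)) (α (y - ε • t)) :=
                  mul_le_mul_of_nonneg_right hCuCu' (Real.rpow_nonneg hd0.le _)
              _ ≤ Cu' * d ^ (m - δ) := mul_le_mul_of_nonneg_left hrp hCu'
          calc |η t * u (x - ε • t) - η t * u (y - ε • t)|
              = η t * |u (x - ε • t) - u (y - ε • t)| := by
                rw [← mul_sub, abs_mul, abs_of_nonneg (hηpos t)]
            _ ≤ η t * (Cu' * d ^ (m - δ)) := mul_le_mul_of_nonneg_left h4 (hηpos t)
      -- bound d ^ (-δ)
      have hdneg : d ^ (-δ) ≤ Real.exp (cα / (1 - b)) := by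
        have hεrp : 0 < ε ^ ((1 : ℝ) / (1 - b)) := Real.rpow_pos_of_pos hε _
        have h1 : d ^ (-δ) ≤ (ε ^ ((1 : ℝ) / (1 - b))) ^ (-δ) :=
          Real.rpow_le_rpow_of_nonpos hεrp hcase.le (neg_nonpos.2 hδpos.le)
        have hlog1ε : 0 ≤ Real.log (1 / ε) := Real.log_nonneg hinv
        have hloglog : Real.log (1 / ε) ≤ Real.log (Real.exp 1 + 1 / ε) :=
          Real.log_le_log (one_div_pos.mpr hε) (by linarith [Real.exp_pos 1])
        have h3 : Real.log (1 / ε) * δ ≤ cα := by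
          rw [hδdef, mul_div_assoc', div_le_iff₀ hlogpos]
          calc Real.log (1 / ε) * cα ≤ Real.log (Real.exp 1 + 1 / ε) * cα :=
                mul_le_mul_of_nonneg_right hloglog hcα.le
            _ = cα * Real.log (Real.exp 1 + 1 / ε) := by ring
        have h2 : (ε ^ ((1 : ℝ) / (1 - b))) ^ (-δ) ≤ Real.exp (cα / (1 - b)) := by
          rw [← Real.rpow_mul hε.le, Real.rpow_def_of_pos hε, Real.exp_le_exp]
          have hlogeq : Real.log ε = -Real.log (1 / ε) := by
            rw [one_div, Real.log_inv, neg_neg]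
          rw [hlogeq]
          have heq2 : -Real.log (1 / ε) * ((1 : ℝ) / (1 - b) * -δ)
              = (Real.log (1 / ε) * δ) / (1 - b) := by ring
          rw [heq2]
          exact (div_le_div_iff_of_pos_right h1b).mpr h3
        exact h1.trans h2
      -- conclude
      have hintabs : Integrable
          (fun t : EuclideanSpace ℝ (Fin n) => |η t * u (x - ε • t) - η t * u (y - ε • t)|) :=
        ((hint x hx).sub (hint y hy)).abs
      calc |∫ t, (η t * u (x - ε • t) - η t * u (y - ε • t))|
          ≤ ∫ t, |η t * u (x - ε • t) - η t * u (y - ε • t)| := by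
            simpa [Real.norm_eq_abs] using norm_integral_le_integral_norm
              (fun t : EuclideanSpace ℝ (Fin n) => η t * u (x - ε • t) - η t * u (y - ε • t))
        _ ≤ ∫ t, η t * (Cu' * d ^ (m - δ)) :=
            integral_mono hintabs (hηInt.mul_const _) fun t => hptw t
        _ = Cu' * d ^ (m - δ) := by rw [integral_mul_const, hηint, one_mul]
        _ = (Cu' * d ^ (-δ)) * d ^ m := by
            rw [sub_eq_add_neg, Real.rpow_add hd0]
            ring
        _ ≤ (Cu' * Real.exp (cα / (1 - b))) * d ^ m :=
            mul_le_mul_of_nonneg_right (mul_le_mul_of_nonneg_left hdneg hCu') hdm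
        _ ≤ c * d ^ m := mul_le_mul_of_nonneg_right (by linarith) hdm
end

section
/- Under the hypotheses of the mollification lemma, in the regime |log|x−y|| ≥ (n+1)/(1−sup α)·|log ε|, one has |x−y|^{1−sup α} ≤ ε^{n+1}, and consequently |u_ε(x)−u_ε(y)| ≤ c|x−y|/ε^{n+1} ≤ c' |x−y|^{max{α(x),α(y)}} for a constant c' independent of ε, x, y. -/
open Metric Set Real

/-- In the regime `|log|x−y|| ≥ (n+1)/(1−supα)·|log ε|` one has
`|x−y|^{1−supα} ≤ ε^{n+1}`, and the Lipschitz bound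
`|u_ε(x)−u_ε(y)| ≤ c|x−y|/ε^{n+1}` upgrades to
`|u_ε(x)−u_ε(y)| ≤ c'|x−y|^{max{α(x),α(y)}}` with `c'` independent of `ε, x, y`. -/
theorem stmt_7 {n : ℕ} (a b c cL : ℝ) (ha : 0 < a) (hab : a ≤ b) (hb : b < 1)
    (hc : 0 < c) (hcL : 0 < cL)
    (α : EuclideanSpace ℝ (Fin n) → ℝ)
    (hαb : ∀ z, a ≤ α z ∧ α z ≤ b)
    (hlog : ∀ z w, z ≠ w → |α z - α w| ≤ c / Real.log (Real.exp 1 + 1 / dist z w))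
    (w : ℝ → EuclideanSpace ℝ (Fin n) → ℝ)
    (hw : ∀ ε : ℝ, 0 < ε → ε < 1 → ∀ x y,
      |w ε x - w ε y| ≤ cL * dist x y / ε ^ (n + 1)) :
    ∃ c' : ℝ, 0 < c' ∧
      ∀ ε : ℝ, 0 < ε → ε < 1 → ∀ x y : EuclideanSpace ℝ (Fin n),
        0 < dist x y → dist x y ≤ 1 →
        ((n : ℝ) + 1) / (1 - b) * |Real.log ε| ≤ |Real.log (dist x y)| →
        dist x y ^ (1 - b) ≤ ε ^ (n + 1) ∧
        |w ε x - w ε y| ≤ c' * dist x y ^ max (α x) (α y) := by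
  refine ⟨cL, hcL, fun ε hε hε1 x y hd hd1 hreg => ?_⟩
  set d := dist x y with hdd
  have hlogd : Real.log d ≤ 0 := Real.log_nonpos hd.le hd1
  have hlogε : Real.log ε < 0 := Real.log_neg hε hε1
  have h1b : (0:ℝ) < 1 - b := by linarith
  rw [abs_of_neg hlogε, abs_of_nonpos hlogd] at hreg
  have key : (1 - b) * Real.log d ≤ ((n:ℝ) + 1) * Real.log ε := by
    have := mul_le_mul_of_nonneg_left hreg h1b.le
    rw [show (1 - b) * (((n:ℝ) + 1) / (1 - b) * -Real.log ε)
        = ((n:ℝ) + 1) * -Real.log ε from by field_simp] at this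
    linarith
  have hεpow : (ε:ℝ) ^ (n + 1) = Real.exp (((n:ℝ) + 1) * Real.log ε) := by
    rw [show ((n:ℝ) + 1) * Real.log ε = Real.log (ε ^ (n + 1)) from by
      rw [Real.log_pow]; push_cast; ring, Real.exp_log (pow_pos hε _)]
  have h1 : d ^ (1 - b) ≤ ε ^ (n + 1) := by
    rw [Real.rpow_def_of_pos hd, hεpow, mul_comm (Real.log d)]
    exact Real.exp_le_exp.mpr key
  refine ⟨h1, ?_⟩
  have hdpos : (0:ℝ) < d ^ (1 - b) := Real.rpow_pos_of_pos hd _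
  have h2 : cL * d / ε ^ (n + 1) ≤ cL * d / d ^ (1 - b) :=
    div_le_div_of_nonneg_left (by positivity) hdpos h1
  have h3 : cL * d / d ^ (1 - b) = cL * d ^ b := by
    have hmul : d ^ b * d ^ (1 - b) = d := by
      rw [← Real.rpow_add hd]; norm_num
    rw [mul_div_assoc]
    congr 1
    rw [div_eq_iff hdpos.ne']
    exact hmul.symm
  have h4 : d ^ b ≤ d ^ max (α x) (α y) :=
    Real.rpow_le_rpow_of_exponent_ge hd hd1 (max_le (hαb x).2 (hαb y).2)
  calc |w ε x - w ε y| ≤ cL * d / ε ^ (n + 1) := hw ε hε hε1 x y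
    _ ≤ cL * d / d ^ (1 - b) := h2
    _ = cL * d ^ b := h3
    _ ≤ cL * d ^ max (α x) (α y) := by
        exact mul_le_mul_of_nonneg_left h4 hcL.le
end
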